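/- Let p be a prime number, let M, K be natural numbers, and let σ : Fin M → Type and τ : Fin K → Type be families of finite nonempty types with card (σ i) < p for all i and card (τ i) < p for all i. Set S = (∀ i, σ i) and T = (∀ i, τ i). Then there do not exist output functions F_A : Bool → S → ZMod p and F_B : Bool → T → ZMod p and a family μ of probability mass functions on S × T indexed by input pairs (x, y) : Bool × Bool, such that for every (x, y) the first marginal of μ (x,y) is the uniform distribution on S, the second marginal is the uniform distribution on T, and every pair (s, t) in the support of μ (x,y) satisfies F_B y t - F_A x s = (if x = true ∧ y = true then 1 else 0) in ZMod p. (This is Theorem 2: no finite collection of nonlocal boxes with uniform outputs, each with output alphabet of size less than p, can perfectly simulate the mod-p nonlocal box.) -/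

import Mathlib

open scoped ENNReal

/-- Two maps of a PMF agree if the functions agree on the support. -/
private lemma pmf_map_congr {α β : Type*} (q : PMF α) (f g : α → β)
    (h : ∀ a ∈ q.support, f a = g a) : q.map f = q.map g := by
  ext b
  simp only [PMF.map_apply]
  refine tsum_congr fun a => ?_
  by_cases ha : q a = 0
  · simp [ha]
  · rw [h a ((PMF.mem_support_iff q a).mpr ha)]

/-- A shift-invariant PMF on `ZMod p` is constant. -/
private lemma pmf_shift_const {p : ℕ} [NeZero p] (q : PMF (ZMod p))
    (hq : q = q.map (· + 1)) (z w : ZMod p) : q z = q w := by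
  have step : ∀ u : ZMod p, q (u + 1) = q u := by
    intro u
    conv_lhs => rw [hq]
    rw [PMF.map_apply, tsum_eq_single u]
    · simp
    · intro b hb
      have : ¬ (u + 1 = b + 1) := fun h => hb (add_right_cancel h).symm
      simp [this]
  have key : ∀ (n : ℕ) (u : ZMod p), q (u + (n : ZMod p)) = q u := by
    intro n
    induction n with
    | zero => intro u; simp
    | succ m ih =>
        intro u
        have : u + ((m + 1 : ℕ) : ZMod p) = (u + (m : ZMod p)) + 1 := by push_cast; ring
        rw [this, step, ih]
  have hw : w = z + ((w - z).val : ZMod p) := by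
    rw [ZMod.natCast_rightInverse (w - z)]; ring
  rw [hw, key]

/-- Theorem 2: no finite collection of nonlocal boxes with uniform outputs,
each with output alphabet of size less than the prime `p`, can perfectly
simulate the mod-`p` nonlocal box. -/
theorem no_small_uniform_boxes_simulate_modp (p : ℕ) (hp : p.Prime)
    (M K : ℕ) (σ : Fin M → Type) (τ : Fin K → Type)
    [∀ i, Fintype (σ i)] [∀ i, Nonempty (σ i)]
    [∀ i, Fintype (τ i)] [∀ i, Nonempty (τ i)]
    (hσ : ∀ i, Fintype.card (σ i) < p) (hτ : ∀ i, Fintype.card (τ i) < p) :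
    ¬ ∃ (F_A : Bool → (∀ i, σ i) → ZMod p)
        (F_B : Bool → (∀ i, τ i) → ZMod p)
        (μ : Bool × Bool → PMF ((∀ i, σ i) × (∀ i, τ i))),
        ∀ x y : Bool,
          (μ (x, y)).map Prod.fst = PMF.uniformOfFintype (∀ i, σ i) ∧
          (μ (x, y)).map Prod.snd = PMF.uniformOfFintype (∀ i, τ i) ∧
          ∀ st ∈ (μ (x, y)).support,
            F_B y st.2 - F_A x st.1 = (if x = true ∧ y = true then (1 : ZMod p) else 0) := by
  classical
  haveI : NeZero p := ⟨hp.ne_zero⟩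
  rintro ⟨F_A, F_B, μ, h⟩
  -- the key pushforward identity for each input pair
  have key : ∀ x y : Bool,
      (PMF.uniformOfFintype (∀ i, τ i)).map (F_B y)
        = (PMF.uniformOfFintype (∀ i, σ i)).map
            (fun s => F_A x s + (if x = true ∧ y = true then (1 : ZMod p) else 0)) := by
    intro x y
    obtain ⟨h1, h2, h3⟩ := h x y
    have hcong : (μ (x, y)).map (fun st => F_B y st.2)
        = (μ (x, y)).map
            (fun st => F_A x st.1 + (if x = true ∧ y = true then (1 : ZMod p) else 0)) := by
      refine pmf_map_congr _ _ _ fun st hst => ?_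
      exact sub_eq_iff_eq_add'.mp (h3 st hst)
    calc (PMF.uniformOfFintype (∀ i, τ i)).map (F_B y)
        = ((μ (x, y)).map Prod.snd).map (F_B y) := by rw [h2]
      _ = (μ (x, y)).map (fun st => F_B y st.2) := PMF.map_comp _ _ _
      _ = (μ (x, y)).map
            (fun st => F_A x st.1 + (if x = true ∧ y = true then (1 : ZMod p) else 0)) := hcong
      _ = ((μ (x, y)).map Prod.fst).map
            (fun s => F_A x s + (if x = true ∧ y = true then (1 : ZMod p) else 0)) :=
          (PMF.map_comp Prod.fst (μ (x, y))
            (fun s => F_A x s + (if x = true ∧ y = true then (1 : ZMod p) else 0))).symm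
      _ = (PMF.uniformOfFintype (∀ i, σ i)).map
            (fun s => F_A x s + (if x = true ∧ y = true then (1 : ZMod p) else 0)) := by rw [h1]
  have h00 := key false false
  have h01 := key false true
  have h10 := key true false
  have h11 := key true true
  simp only [Bool.false_eq_true, false_and, and_false, and_self, if_false, if_true,
    add_zero] at h00 h01 h10 h11
  -- A1 is shift-invariant
  set A1 := (PMF.uniformOfFintype (∀ i, σ i)).map (F_A true) with hA1
  have hshift : A1 = A1.map (· + 1) := by
    have hmc : A1.map (· + 1)
        = (PMF.uniformOfFintype (∀ i, σ i)).map (fun s => F_A true s + 1) :=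
      PMF.map_comp _ _ _
    rw [hmc, ← h11, h01, ← h00, h10]
  have hconst := pmf_shift_const A1 hshift
  -- hence A1 0 = p⁻¹
  have hsum : ∑ z : ZMod p, A1 z = 1 := by
    exact (tsum_fintype _).symm.trans A1.tsum_coe
  have hcard : (p : ℝ≥0∞) * A1 0 = 1 := by
    rw [← hsum, Finset.sum_congr rfl fun z _ => hconst z 0]
    simp [Finset.sum_const, ZMod.card, mul_comm]
  have hp0 : (p : ℝ≥0∞) ≠ 0 := by exact_mod_cast hp.ne_zero
  have hpt : (p : ℝ≥0∞) ≠ ⊤ := ENNReal.natCast_ne_top p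
  have hA10 : A1 0 = (p : ℝ≥0∞)⁻¹ := by
    have h5 := congrArg (fun t => (p : ℝ≥0∞)⁻¹ * t) hcard
    simpa [← mul_assoc, ENNReal.inv_mul_cancel hp0 hpt] using h5
  -- compute A1 0 as a fiber count over card S
  set n := (Finset.univ.filter fun s : (∀ i, σ i) => (0 : ZMod p) = F_A true s).card with hn
  set N := Fintype.card (∀ i, σ i) with hN
  have hNpos : 0 < N := Fintype.card_pos
  have hA10' : A1 0 = (n : ℝ≥0∞) * (N : ℝ≥0∞)⁻¹ := by
    rw [hA1, PMF.map_apply, tsum_fintype]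
    simp only [PMF.uniformOfFintype_apply, ← hN]
    rw [← Finset.sum_filter (fun s : (∀ i, σ i) => (0 : ZMod p) = F_A true s)
      (fun _ => ((N : ℝ≥0∞))⁻¹)]
    simp [Finset.sum_const, ← hn, mul_comm]
  have hN0 : (N : ℝ≥0∞) ≠ 0 := by exact_mod_cast hNpos.ne'
  have hNt : (N : ℝ≥0∞) ≠ ⊤ := ENNReal.natCast_ne_top N
  have heq : (n : ℝ≥0∞) * (N : ℝ≥0∞)⁻¹ = (p : ℝ≥0∞)⁻¹ := hA10'.symm.trans hA10
  have hmul : (n : ℝ≥0∞) * p = N := by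
    have h1 : (n : ℝ≥0∞) * (N : ℝ≥0∞)⁻¹ * ((N : ℝ≥0∞) * p)
        = (p : ℝ≥0∞)⁻¹ * ((N : ℝ≥0∞) * p) := by rw [heq]
    have h2 : (n : ℝ≥0∞) * (N : ℝ≥0∞)⁻¹ * ((N : ℝ≥0∞) * p) = (n : ℝ≥0∞) * p := by
      rw [show (n : ℝ≥0∞) * (N : ℝ≥0∞)⁻¹ * ((N : ℝ≥0∞) * p)
          = (n : ℝ≥0∞) * p * ((N : ℝ≥0∞)⁻¹ * N) by ring,
        ENNReal.inv_mul_cancel hN0 hNt, mul_one]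
    have h3 : (p : ℝ≥0∞)⁻¹ * ((N : ℝ≥0∞) * p) = (N : ℝ≥0∞) := by
      rw [show (p : ℝ≥0∞)⁻¹ * ((N : ℝ≥0∞) * p) = (N : ℝ≥0∞) * ((p : ℝ≥0∞)⁻¹ * p) by ring,
        ENNReal.inv_mul_cancel hp0 hpt, mul_one]
    rw [← h2, h1, h3]
  have hnat : n * p = N := by exact_mod_cast hmul
  have hdvd : p ∣ N := ⟨n, by rw [← hnat, mul_comm]⟩
  -- contradiction: p prime cannot divide a product of factors all < p
  have hNprod : N = ∏ i, Fintype.card (σ i) := by rw [hN]; exact Fintype.card_pi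
  rw [hNprod] at hdvd
  obtain ⟨i, -, hdi⟩ := (hp.prime.dvd_finset_prod_iff _).mp hdvd
  exact absurd (hσ i) (not_lt.mpr (Nat.le_of_dvd Fintype.card_pos hdi))
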